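/- Let N ≥ 2 and let Ω = {x ∈ ℝ^N : x_1 > x_2 > … > x_N}. For every smooth function φ : Ω → ℂ, define ψ(x) = (∏_{1≤k<j≤N} sinh(x_k − x_j))^{1/2} · φ(x) (positive real square root, well defined on Ω). Then for every x ∈ Ω one has (∏_{1≤k<j≤N} sinh(x_k − x_j))^{1/2} · [ −∑_{m=1}^N ∂²φ/∂x_m²(x) − ∑_{1≤k<j≤N} coth(x_k − x_j)·(∂φ/∂x_k − ∂φ/∂x_j)(x) ] = −∑_{m=1}^N ∂²ψ/∂x_m²(x) − (1/2)·∑_{1≤k<j≤N} sinh(x_k − x_j)^{−2}·ψ(x) + ((N³ − N)/12)·ψ(x). In other words, conjugation by ∏ sinh^{1/2}(x_k − x_j) transforms the radial part of the Laplace–Beltrami operator into a Sutherland (trigonometric Calogero–Moser) Hamiltonian with inverse-sinh-squared potential plus an explicit constant. -/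

import Mathlib

noncomputable section

open Finset

/-- Partial derivative in the `m`-th coordinate direction of a function on `ℝ^N`. -/
def pd {N : ℕ} (m : Fin N) (f : (Fin N → ℝ) → ℂ) (x : Fin N → ℝ) : ℂ :=
  fderiv ℝ f x (Pi.single m 1)

set_option linter.unnecessarySeqFocus false

private def Qr (n : ℕ) : ℝ := ∑ k ∈ Finset.range n, ∑ j ∈ Finset.range n, if k < j then (1:ℝ) else 0
private def Rr (n : ℕ) : ℝ := ∑ a ∈ Finset.range n, ∑ b ∈ Finset.range n, ∑ c ∈ Finset.range n, if a < b ∧ b < c then (1:ℝ) else 0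

private lemma Qr_succ (n : ℕ) : Qr (n+1) = Qr n + n := by
  unfold Qr
  rw [Finset.sum_range_succ]
  have h1 : ∑ j ∈ Finset.range (n+1), (if n < j then (1:ℝ) else 0) = 0 := by
    apply Finset.sum_eq_zero
    intro j hj
    rw [Finset.mem_range] at hj
    simp [Nat.not_lt.mpr (Nat.lt_succ_iff.mp hj)]
  rw [h1, add_zero]
  have h2 : ∀ k ∈ Finset.range n, (∑ j ∈ Finset.range (n+1), if k < j then (1:ℝ) else 0)
      = (∑ j ∈ Finset.range n, if k < j then (1:ℝ) else 0) + 1 := by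
    intro k hk
    rw [Finset.sum_range_succ, if_pos (Finset.mem_range.mp hk)]
  rw [Finset.sum_congr rfl h2, Finset.sum_add_distrib]
  simp

private lemma Qr_val (n : ℕ) : 2 * Qr n = (n:ℝ)^2 - n := by
  induction n with
  | zero => simp [Qr]
  | succ n ih => rw [Qr_succ]; push_cast; nlinarith [ih]

private lemma Rr_succ (n : ℕ) : Rr (n+1) = Rr n + Qr n := by
  unfold Rr Qr
  rw [Finset.sum_range_succ]
  have h0 : ∑ b ∈ Finset.range (n+1), ∑ c ∈ Finset.range (n+1), (if n < b ∧ b < c then (1:ℝ) else 0) = 0 := by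
    apply Finset.sum_eq_zero; intro b hb
    apply Finset.sum_eq_zero; intro c hc
    rw [Finset.mem_range] at hb
    have : ¬ (n < b ∧ b < c) := by
      rintro ⟨h1, _⟩; omega
    simp [this]
  rw [h0, add_zero]
  have h2 : ∀ a ∈ Finset.range n, (∑ b ∈ Finset.range (n+1), ∑ c ∈ Finset.range (n+1), if a < b ∧ b < c then (1:ℝ) else 0)
      = (∑ b ∈ Finset.range n, ∑ c ∈ Finset.range n, if a < b ∧ b < c then (1:ℝ) else 0)
        + (∑ b ∈ Finset.range n, if a < b then (1:ℝ) else 0) := by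
    intro a ha
    rw [Finset.sum_range_succ]
    have hb0 : ∑ c ∈ Finset.range (n+1), (if a < n ∧ n < c then (1:ℝ) else 0) = 0 := by
      apply Finset.sum_eq_zero; intro c hc
      rw [Finset.mem_range] at hc
      have : ¬ (a < n ∧ n < c) := by rintro ⟨_, h⟩; omega
      simp [this]
    rw [hb0, add_zero]
    have hbb : ∀ b ∈ Finset.range n, (∑ c ∈ Finset.range (n+1), if a < b ∧ b < c then (1:ℝ) else 0)
        = (∑ c ∈ Finset.range n, if a < b ∧ b < c then (1:ℝ) else 0) + (if a < b then (1:ℝ) else 0) := by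
      intro b hb
      rw [Finset.sum_range_succ]
      congr 1
      rw [Finset.mem_range] at hb
      by_cases hab : a < b
      · simp [hab, hb]
      · simp [hab]
    rw [Finset.sum_congr rfl hbb, Finset.sum_add_distrib]
  rw [Finset.sum_congr rfl h2, Finset.sum_add_distrib]

private lemma count_val (n : ℕ) : 6 * (Qr n + Rr n) = (n:ℝ)^3 - n := by
  induction n with
  | zero => simp [Qr, Rr]
  | succ n ih =>
    rw [Qr_succ, Rr_succ]
    have := Qr_val n
    push_cast
    push_cast at ih this
    nlinarith [ih, this]

private lemma count_fin (N : ℕ) :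
    6 * ((∑ k : Fin N, ∑ j : Fin N, if k < j then (1:ℝ) else 0)
       + (∑ a : Fin N, ∑ b : Fin N, ∑ c : Fin N, if a < b ∧ b < c then (1:ℝ) else 0))
     = (N:ℝ)^3 - N := by
  have hQ : (∑ k : Fin N, ∑ j : Fin N, if k < j then (1:ℝ) else 0) = Qr N := by
    unfold Qr
    rw [← Fin.sum_univ_eq_sum_range (fun k => ∑ j ∈ Finset.range N, if k < j then (1:ℝ) else 0) N]
    apply Finset.sum_congr rfl
    intro k _
    rw [← Fin.sum_univ_eq_sum_range (fun j => if (k:ℕ) < j then (1:ℝ) else 0) N]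
    apply Finset.sum_congr rfl
    intro j _
    exact if_congr Fin.lt_def rfl rfl
  have hR : (∑ a : Fin N, ∑ b : Fin N, ∑ c : Fin N, if a < b ∧ b < c then (1:ℝ) else 0) = Rr N := by
    unfold Rr
    rw [← Fin.sum_univ_eq_sum_range (fun a => ∑ b ∈ Finset.range N, ∑ c ∈ Finset.range N, if a < b ∧ b < c then (1:ℝ) else 0) N]
    apply Finset.sum_congr rfl
    intro a _
    rw [← Fin.sum_univ_eq_sum_range (fun b => ∑ c ∈ Finset.range N, if (a:ℕ) < b ∧ b < c then (1:ℝ) else 0) N]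
    apply Finset.sum_congr rfl
    intro b _
    rw [← Fin.sum_univ_eq_sum_range (fun c => if (a:ℕ) < (b:ℕ) ∧ (b:ℕ) < c then (1:ℝ) else 0) N]
    apply Finset.sum_congr rfl
    intro c _
    exact if_congr (and_congr Fin.lt_def Fin.lt_def) rfl rfl
  rw [hQ, hR, count_val]

private lemma ite_split3 {N : ℕ} (m j j' : Fin N) (x : ℝ) :
    (if j < j' ∧ ¬j = m ∧ ¬j' = m then x else 0)
      = (if m < j ∧ j < j' then x else 0) + (if j < m ∧ m < j' then x else 0)
        + (if j < j' ∧ j' < m then x else 0) := by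
  simp only [Fin.lt_def, ← Fin.val_eq_val]
  split_ifs <;> first | ring1 | (exfalso; omega)

private lemma key_sum {N : ℕ} (g : Fin N → Fin N → ℝ)
    (hg : ∀ k j, g k j = - g j k)
    (htrip : ∀ a b c : Fin N, a < b → b < c →
      g a b * g a c + g b a * g b c + g c a * g c b = 1) :
    ∑ m : Fin N, (∑ j : Fin N, if j = m then 0 else g m j)^2
      = 2 * (∑ k : Fin N, ∑ j : Fin N, if k < j then (g k j)^2 else 0)
        + 2 * (∑ a : Fin N, ∑ b : Fin N, ∑ c : Fin N, if a < b ∧ b < c then (1:ℝ) else 0) := by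
  have expand : ∀ m : Fin N, (∑ j : Fin N, if j = m then 0 else g m j)^2
      = (∑ j : Fin N, if j = m then 0 else (g m j)^2)
        + ∑ j : Fin N, ∑ j' : Fin N,
            (if j' = j then 0 else
              (if j = m then 0 else g m j) * (if j' = m then 0 else g m j')) := by
    intro m
    rw [sq, Finset.sum_mul_sum]
    have : ∀ j : Fin N, ∀ j' : Fin N,
        (if j = m then 0 else g m j) * (if j' = m then 0 else g m j')
          = (if j' = j then (if j = m then 0 else (g m j)^2) else 0)
            + (if j' = j then 0 else
              (if j = m then 0 else g m j) * (if j' = m then 0 else g m j')) := by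
      intro j j'
      by_cases h : j' = j
      · subst h; by_cases h2 : j' = m <;> simp [h2, sq]
      · simp [h]
    calc ∑ j : Fin N, ∑ j' : Fin N,
            (if j = m then 0 else g m j) * (if j' = m then 0 else g m j')
        = ∑ j : Fin N, ((if j = m then 0 else (g m j)^2)
            + ∑ j' : Fin N, (if j' = j then 0 else
              (if j = m then 0 else g m j) * (if j' = m then 0 else g m j'))) := by
          apply Finset.sum_congr rfl
          intro j _
          rw [Finset.sum_congr rfl (fun j' _ => this j j'), Finset.sum_add_distrib,
            Finset.sum_ite_eq' Finset.univ j (fun j' => if j = m then 0 else (g m j)^2)]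
          simp
      _ = _ := by rw [Finset.sum_add_distrib]
  rw [Finset.sum_congr rfl (fun m _ => expand m), Finset.sum_add_distrib]
  -- Diagonal part
  have diag : ∑ m : Fin N, ∑ j : Fin N, (if j = m then 0 else (g m j)^2)
      = 2 * (∑ k : Fin N, ∑ j : Fin N, if k < j then (g k j)^2 else 0) := by
    have tri : ∀ m j : Fin N, (if j = m then 0 else (g m j)^2)
        = (if m < j then (g m j)^2 else 0) + (if j < m then (g m j)^2 else 0) := by
      intro m j
      rcases lt_trichotomy j m with h | h | h
      · simp [h, h.ne, not_lt_of_gt h]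
      · simp [h]
      · simp [h, (h.ne').symm, h.ne', not_lt_of_gt h]
    calc ∑ m : Fin N, ∑ j : Fin N, (if j = m then 0 else (g m j)^2)
        = ∑ m : Fin N, ((∑ j : Fin N, if m < j then (g m j)^2 else 0)
            + ∑ j : Fin N, if j < m then (g m j)^2 else 0) := by
          refine Finset.sum_congr rfl fun m _ => ?_
          rw [Finset.sum_congr rfl (fun j _ => tri m j), Finset.sum_add_distrib]
      _ = (∑ m : Fin N, ∑ j : Fin N, if m < j then (g m j)^2 else 0)
            + ∑ m : Fin N, ∑ j : Fin N, (if j < m then (g m j)^2 else 0) := by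
          rw [Finset.sum_add_distrib]
      _ = 2 * (∑ k : Fin N, ∑ j : Fin N, if k < j then (g k j)^2 else 0) := by
          rw [Finset.sum_comm (f := fun m j => if j < m then (g m j)^2 else 0)]
          have : ∀ k j : Fin N, (if k < j then (g j k)^2 else 0)
              = (if k < j then (g k j)^2 else 0) := by
            intro k j
            by_cases h : k < j
            · simp only [h, if_true]; rw [hg j k]; ring
            · simp [h]
          rw [Finset.sum_congr rfl (fun k _ => Finset.sum_congr rfl (fun j _ => this k j))]
          ring
  rw [diag]
  congr 1
  -- Off-diagonal part
  have step1 : ∀ m j j' : Fin N,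
      (if j' = j then 0 else
        (if j = m then 0 else g m j) * (if j' = m then 0 else g m j'))
      = (if j < j' ∧ ¬j = m ∧ ¬j' = m then g m j * g m j' else 0)
        + (if j' < j ∧ ¬j = m ∧ ¬j' = m then g m j * g m j' else 0) := by
    intro m j j'
    by_cases h1 : j' = j
    · subst h1; simp [lt_irrefl]
    · by_cases h2 : j = m
      · subst h2; simp
      · by_cases h3 : j' = m
        · subst h3; simp
        · rcases lt_trichotomy j j' with h | h | h
          · simp [h1, h2, h3, h, not_lt_of_gt h]
          · exact absurd h.symm h1
          · simp [h1, h2, h3, h, not_lt_of_gt h]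
  have sym : ∑ m : Fin N, ∑ j : Fin N, ∑ j' : Fin N,
        (if j' < j ∧ ¬j = m ∧ ¬j' = m then g m j * g m j' else 0)
      = ∑ m : Fin N, ∑ j : Fin N, ∑ j' : Fin N,
        (if j < j' ∧ ¬j = m ∧ ¬j' = m then g m j * g m j' else 0) := by
    refine Finset.sum_congr rfl fun m _ => ?_
    rw [Finset.sum_comm]
    refine Finset.sum_congr rfl fun j _ => Finset.sum_congr rfl fun j' _ => ?_
    by_cases h : j < j' ∧ ¬j = m ∧ ¬j' = m
    · rw [if_pos ⟨h.1, h.2.2, h.2.1⟩, if_pos h]; ring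
    · rw [if_neg, if_neg h]
      rintro ⟨ha, hb, hc⟩; exact h ⟨ha, hc, hb⟩
  calc ∑ m : Fin N, ∑ j : Fin N, ∑ j' : Fin N,
        (if j' = j then 0 else
          (if j = m then 0 else g m j) * (if j' = m then 0 else g m j'))
      = 2 * ∑ m : Fin N, ∑ j : Fin N, ∑ j' : Fin N,
          (if j < j' ∧ ¬j = m ∧ ¬j' = m then g m j * g m j' else 0) := by
        rw [Finset.sum_congr rfl (fun m _ => Finset.sum_congr rfl (fun j _ =>
          Finset.sum_congr rfl (fun j' _ => step1 m j j')))]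
        simp only [Finset.sum_add_distrib]
        rw [sym]; ring
    _ = 2 * ∑ a : Fin N, ∑ b : Fin N, ∑ c : Fin N, (if a < b ∧ b < c then (1:ℝ) else 0) := by
        congr 1
        have split : ∑ m : Fin N, ∑ j : Fin N, ∑ j' : Fin N,
            (if j < j' ∧ ¬j = m ∧ ¬j' = m then g m j * g m j' else 0)
          = (∑ m : Fin N, ∑ j : Fin N, ∑ j' : Fin N,
              (if m < j ∧ j < j' then g m j * g m j' else 0))
            + (∑ m : Fin N, ∑ j : Fin N, ∑ j' : Fin N,
              (if j < m ∧ m < j' then g m j * g m j' else 0))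
            + (∑ m : Fin N, ∑ j : Fin N, ∑ j' : Fin N,
              (if j < j' ∧ j' < m then g m j * g m j' else 0)) := by
          simp only [← Finset.sum_add_distrib]
          exact Finset.sum_congr rfl fun m _ => Finset.sum_congr rfl fun j _ =>
            Finset.sum_congr rfl fun j' _ => ite_split3 m j j' _
        rw [split]
        have hY2 : (∑ m : Fin N, ∑ j : Fin N, ∑ j' : Fin N,
              (if j < m ∧ m < j' then g m j * g m j' else 0))
            = ∑ a : Fin N, ∑ b : Fin N, ∑ c : Fin N,
              (if a < b ∧ b < c then g b a * g b c else 0) := by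
          rw [Finset.sum_comm (f := fun m j => ∑ j' : Fin N, if j < m ∧ m < j' then g m j * g m j' else 0)]
        have hY3 : (∑ m : Fin N, ∑ j : Fin N, ∑ j' : Fin N,
              (if j < j' ∧ j' < m then g m j * g m j' else 0))
            = ∑ a : Fin N, ∑ b : Fin N, ∑ c : Fin N,
              (if a < b ∧ b < c then g c a * g c b else 0) := by
          rw [Finset.sum_comm (f := fun m j => ∑ j' : Fin N, if j < j' ∧ j' < m then g m j * g m j' else 0)]
          refine Finset.sum_congr rfl fun a _ => ?_
          rw [Finset.sum_comm (f := fun m j' => if a < j' ∧ j' < m then g m a * g m j' else 0)]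
        rw [hY2, hY3]
        simp only [← Finset.sum_add_distrib]
        refine Finset.sum_congr rfl fun a _ => Finset.sum_congr rfl fun b _ =>
          Finset.sum_congr rfl fun c _ => ?_
        by_cases h : a < b ∧ b < c
        · simp only [h, and_true, if_true, if_pos]
          exact htrip a b c h.1 h.2
        · simp [h]

private lemma sum_S {M : Type*} [AddCommMonoid M] {N : ℕ} (f : Fin N × Fin N → M) :
    ∑ q ∈ Finset.univ.filter (fun q : Fin N × Fin N => q.1 < q.2), f q
      = ∑ k : Fin N, ∑ j : Fin N, if k < j then f (k, j) else 0 := by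
  rw [Finset.sum_filter, Fintype.sum_prod_type]

private lemma a_eq {N : ℕ} (g : Fin N → Fin N → ℝ) (hg : ∀ k j, g k j = - g j k) (m : Fin N) :
    (∑ k : Fin N, ∑ j : Fin N,
        if k < j then g k j * ((if k = m then (1:ℝ) else 0) - (if j = m then 1 else 0)) else 0)
      = ∑ j : Fin N, if j = m then 0 else g m j := by
  have step : ∀ k j : Fin N,
      (if k < j then g k j * ((if k = m then (1:ℝ) else 0) - (if j = m then 1 else 0)) else 0)
        = (if k = m ∧ k < j then g k j else 0) - (if j = m ∧ k < j then g k j else 0) := by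
    intro k j
    by_cases h : k < j
    · by_cases h1 : k = m
      · have h2 : ¬ j = m := by rintro rfl; exact absurd h1 (ne_of_lt h)
        simp [h, h1, h2]
      · by_cases h2 : j = m <;> simp [h, h1, h2] <;> split_ifs <;> ring
    · simp [h]
  rw [Finset.sum_congr rfl fun k _ => Finset.sum_congr rfl fun j _ => step k j]
  simp only [Finset.sum_sub_distrib]
  have T1 : (∑ k : Fin N, ∑ j : Fin N, if k = m ∧ k < j then g k j else 0)
      = ∑ j : Fin N, if m < j then g m j else 0 := by
    have inner : ∀ k : Fin N, (∑ j : Fin N, if k = m ∧ k < j then g k j else 0)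
        = if k = m then (∑ j : Fin N, if m < j then g m j else 0) else 0 := by
      intro k
      by_cases hk : k = m
      · subst hk; simp
      · simp [hk]
    rw [Finset.sum_congr rfl fun k _ => inner k, Finset.sum_ite_eq' Finset.univ m]
    simp
  have T2 : (∑ k : Fin N, ∑ j : Fin N, if j = m ∧ k < j then g k j else 0)
      = ∑ k : Fin N, if k < m then g k m else 0 := by
    refine Finset.sum_congr rfl fun k _ => ?_
    have inner : ∀ j : Fin N, (if j = m ∧ k < j then g k j else 0)
        = if j = m then (if k < m then g k m else 0) else 0 := by
      intro j
      by_cases hj : j = m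
      · subst hj; simp
      · simp [hj]
    rw [Finset.sum_congr rfl fun j _ => inner j, Finset.sum_ite_eq' Finset.univ m]
    simp
  rw [T1, T2]
  rw [show (∑ k : Fin N, if k < m then g k m else 0) = ∑ k : Fin N, -(if k < m then g m k else 0) by
    refine Finset.sum_congr rfl fun k _ => ?_
    by_cases h : k < m <;> simp [h, hg k m]]
  rw [Finset.sum_neg_distrib, sub_neg_eq_add, ← Finset.sum_add_distrib]
  refine Finset.sum_congr rfl fun j _ => ?_
  rcases lt_trichotomy j m with h | h | h
  · simp [h, h.ne, not_lt_of_gt h]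
  · simp [h]
  · simp [h, h.ne', not_lt_of_gt h]

private lemma first_order {N : ℕ} (c : Fin N → Fin N → ℂ) (e : Fin N → ℂ) :
    ∑ m : Fin N, (∑ k : Fin N, ∑ j : Fin N,
        if k < j then c k j * ((if k = m then (1:ℂ) else 0) - (if j = m then 1 else 0)) else 0) * e m
      = ∑ k : Fin N, ∑ j : Fin N, if k < j then c k j * (e k - e j) else 0 := by
  have step : ∀ m k j : Fin N,
      (if k < j then c k j * ((if k = m then (1:ℂ) else 0) - (if j = m then 1 else 0)) else 0) * e m
        = (if k = m ∧ k < j then c k j * e m else 0) - (if j = m ∧ k < j then c k j * e m else 0) := by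
    intro m k j
    by_cases h : k < j
    · by_cases h1 : k = m
      · have h2 : ¬ j = m := by rintro rfl; exact absurd h1 (ne_of_lt h)
        simp [h, h1, h2]
      · by_cases h2 : j = m <;> simp [h, h1, h2] <;> split_ifs <;> ring
    · simp [h]
  calc ∑ m : Fin N, (∑ k : Fin N, ∑ j : Fin N,
        if k < j then c k j * ((if k = m then (1:ℂ) else 0) - (if j = m then 1 else 0)) else 0) * e m
      = ∑ m : Fin N, ∑ k : Fin N, ∑ j : Fin N,
          ((if k = m ∧ k < j then c k j * e m else 0) - (if j = m ∧ k < j then c k j * e m else 0)) := by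
        refine Finset.sum_congr rfl fun m _ => ?_
        rw [Finset.sum_mul]
        refine Finset.sum_congr rfl fun k _ => ?_
        rw [Finset.sum_mul]
        exact Finset.sum_congr rfl fun j _ => step m k j
    _ = ∑ k : Fin N, ∑ j : Fin N, ∑ m : Fin N,
          ((if k = m ∧ k < j then c k j * e m else 0) - (if j = m ∧ k < j then c k j * e m else 0)) := by
        rw [Finset.sum_comm]
        refine Finset.sum_congr rfl fun k _ => ?_
        rw [Finset.sum_comm]
    _ = ∑ k : Fin N, ∑ j : Fin N, if k < j then c k j * (e k - e j) else 0 := by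
        refine Finset.sum_congr rfl fun k _ => Finset.sum_congr rfl fun j _ => ?_
        rw [Finset.sum_sub_distrib]
        have A : (∑ m : Fin N, if k = m ∧ k < j then c k j * e m else 0)
            = if k < j then c k j * e k else 0 := by
          have : ∀ m : Fin N, (if k = m ∧ k < j then c k j * e m else 0)
              = if k = m then (if k < j then c k j * e k else 0) else 0 := by
            intro m
            by_cases hm : k = m
            · subst hm; simp
            · simp [hm]
          rw [Finset.sum_congr rfl fun m _ => this m, Finset.sum_ite_eq Finset.univ k]
          simp
        have B : (∑ m : Fin N, if j = m ∧ k < j then c k j * e m else 0)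
            = if k < j then c k j * e j else 0 := by
          have : ∀ m : Fin N, (if j = m ∧ k < j then c k j * e m else 0)
              = if j = m then (if k < j then c k j * e j else 0) else 0 := by
            intro m
            by_cases hm : j = m
            · subst hm; simp
            · simp [hm]
          rw [Finset.sum_congr rfl fun m _ => this m, Finset.sum_ite_eq Finset.univ j]
          simp
        rw [A, B]
        by_cases h : k < j
        · simp [h]; ring
        · simp [h]

private def cth (t : ℝ) : ℝ := Real.cosh t / Real.sinh t
private def ddv (t : ℝ) : ℝ := (Real.sinh t * Real.sinh t - Real.cosh t * Real.cosh t) / Real.sinh t ^ 2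

private lemma cth_anti (s t : ℝ) : cth (s - t) = - cth (t - s) := by
  unfold cth
  rw [show s - t = -(t - s) by ring, Real.sinh_neg, Real.cosh_neg, div_neg]

private lemma coth_triple {u v : ℝ} (hu : 0 < u) (hv : 0 < v) :
    cth u * cth (u + v) - cth u * cth v + cth v * cth (u + v) = 1 := by
  have hsu : Real.sinh u ≠ 0 := ne_of_gt (Real.sinh_pos_iff.mpr hu)
  have hsv : Real.sinh v ≠ 0 := ne_of_gt (Real.sinh_pos_iff.mpr hv)
  have hsuv : Real.sinh (u + v) ≠ 0 := ne_of_gt (Real.sinh_pos_iff.mpr (by linarith))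
  unfold cth
  field_simp
  rw [Real.sinh_add, Real.cosh_add]
  ring

private lemma cth_sq {t : ℝ} (hs : Real.sinh t ≠ 0) :
    cth t ^ 2 = (Real.sinh t ^ 2)⁻¹ + 1 := by
  unfold cth
  rw [div_pow, Real.cosh_sq]
  field_simp
  ring

private lemma ddv_eq {t : ℝ} (hs : Real.sinh t ≠ 0) : ddv t = -(Real.sinh t ^ 2)⁻¹ := by
  unfold ddv
  have h := Real.cosh_sq_sub_sinh_sq t
  have : Real.sinh t * Real.sinh t - Real.cosh t * Real.cosh t = -1 := by nlinarith
  rw [this]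
  field_simp

private lemma eps_sq_sum {N : ℕ} {k j : Fin N} (h : k ≠ j) :
    ∑ m : Fin N, ((if k = m then (1:ℝ) else 0) - (if j = m then 1 else 0))^2 = 2 := by
  have step : ∀ m : Fin N, ((if k = m then (1:ℝ) else 0) - (if j = m then 1 else 0))^2
      = (if k = m then (1:ℝ) else 0) + (if j = m then 1 else 0) := by
    intro m
    by_cases h1 : k = m
    · have h2 : ¬ j = m := fun hh => h (h1.trans hh.symm)
      simp [h1, h2]
    · by_cases h2 : j = m <;> simp [h1, h2]
  rw [Finset.sum_congr rfl fun m _ => step m, Finset.sum_add_distrib,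
    Fintype.sum_ite_eq k (fun _ => (1:ℝ)), Fintype.sum_ite_eq j (fun _ => (1:ℝ))]
  norm_num

private def SS (N : ℕ) : Finset (Fin N × Fin N) :=
  Finset.univ.filter (fun q : Fin N × Fin N => q.1 < q.2)

private def ll {N : ℕ} (q : Fin N × Fin N) : (Fin N → ℝ) →L[ℝ] ℝ :=
  (ContinuousLinearMap.proj q.1 : (Fin N → ℝ) →L[ℝ] ℝ)
    - (ContinuousLinearMap.proj q.2 : (Fin N → ℝ) →L[ℝ] ℝ)

private def Wf (N : ℕ) : (Fin N → ℝ) → ℝ := fun y =>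
  Real.sqrt (∏ q ∈ SS N, Real.sinh (y q.1 - y q.2))

private def Lf (N : ℕ) : (Fin N → ℝ) → ℝ := fun y =>
  (1/2) * ∑ q ∈ SS N, Real.log (Real.sinh (y q.1 - y q.2))

private def DL {N : ℕ} (x : Fin N → ℝ) : (Fin N → ℝ) →L[ℝ] ℝ :=
  (1/2 : ℝ) • ∑ q ∈ SS N, cth (x q.1 - x q.2) • ll q

private def bb {N : ℕ} (m : Fin N) (x : Fin N → ℝ) : ℝ :=
  (1/2) * ∑ q ∈ SS N, cth (x q.1 - x q.2) *
    ((if q.1 = m then (1:ℝ) else 0) - (if q.2 = m then 1 else 0))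

private def Dbb {N : ℕ} (m : Fin N) (x : Fin N → ℝ) : (Fin N → ℝ) →L[ℝ] ℝ :=
  (1/2 : ℝ) • ∑ q ∈ SS N,
    ((if q.1 = m then (1:ℝ) else 0) - (if q.2 = m then 1 else 0)) •
      (ddv (x q.1 - x q.2) • ll q)

private lemma ll_apply_single {N : ℕ} (q : Fin N × Fin N) (m : Fin N) :
    ll q (Pi.single m 1) = (if q.1 = m then (1:ℝ) else 0) - (if q.2 = m then 1 else 0) := by
  simp [ll, ContinuousLinearMap.sub_apply, ContinuousLinearMap.proj_apply, Pi.single_apply]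

private lemma hasFDerivAt_sub_coord {N : ℕ} (q : Fin N × Fin N) (x : Fin N → ℝ) :
    HasFDerivAt (fun y : Fin N → ℝ => y q.1 - y q.2) (ll q) x :=
  ((ContinuousLinearMap.proj q.1 :
      (Fin N → ℝ) →L[ℝ] ℝ).hasFDerivAt).sub
    ((ContinuousLinearMap.proj q.2 : (Fin N → ℝ) →L[ℝ] ℝ).hasFDerivAt)

private lemma hasFDerivAt_Lf {N : ℕ} {x : Fin N → ℝ}
    (hp : ∀ q ∈ SS N, 0 < Real.sinh (x q.1 - x q.2)) :
    HasFDerivAt (Lf N) (DL x) x := by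
  unfold Lf DL
  refine HasFDerivAt.const_mul ?_ _
  refine HasFDerivAt.fun_sum fun q hq => ?_
  have hs : Real.sinh (x q.1 - x q.2) ≠ 0 := ne_of_gt (hp q hq)
  have h1 : HasDerivAt (fun t => Real.log (Real.sinh t))
      ((Real.sinh (x q.1 - x q.2))⁻¹ * Real.cosh (x q.1 - x q.2)) (x q.1 - x q.2) :=
    (Real.hasDerivAt_log hs).comp _ (Real.hasDerivAt_sinh _)
  have h2 := h1.comp_hasFDerivAt x (hasFDerivAt_sub_coord q x)
  have : (Real.sinh (x q.1 - x q.2))⁻¹ * Real.cosh (x q.1 - x q.2) = cth (x q.1 - x q.2) := by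
    rw [cth, div_eq_inv_mul]
  rwa [this] at h2

private lemma Wf_eq_exp_Lf {N : ℕ} {y : Fin N → ℝ}
    (hp : ∀ q ∈ SS N, 0 < Real.sinh (y q.1 - y q.2)) :
    Wf N y = Real.exp (Lf N y) := by
  unfold Wf Lf
  have hP : 0 < ∏ q ∈ SS N, Real.sinh (y q.1 - y q.2) := Finset.prod_pos hp
  rw [Real.sqrt_eq_rpow, Real.rpow_def_of_pos hP,
    Real.log_prod (fun q hq => ne_of_gt (hp q hq))]
  ring_nf

private lemma hasFDerivAt_Wf {N : ℕ} {x : Fin N → ℝ} {U : Set (Fin N → ℝ)}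
    (hU : IsOpen U) (hxU : x ∈ U)
    (hp : ∀ y ∈ U, ∀ q ∈ SS N, 0 < Real.sinh (y q.1 - y q.2)) :
    HasFDerivAt (Wf N) (Wf N x • DL x) x := by
  have hE : HasFDerivAt (fun y => Real.exp (Lf N y)) (Real.exp (Lf N x) • DL x) x :=
    (Real.hasDerivAt_exp (Lf N x)).comp_hasFDerivAt x (hasFDerivAt_Lf (hp x hxU))
  have heq : Wf N =ᶠ[nhds x] fun y => Real.exp (Lf N y) :=
    Filter.eventuallyEq_of_mem (hU.mem_nhds hxU) (fun y hy => Wf_eq_exp_Lf (hp y hy))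
  have := hE.congr_of_eventuallyEq heq
  rwa [← Wf_eq_exp_Lf (hp x hxU)] at this

private lemma DL_apply_single {N : ℕ} (x : Fin N → ℝ) (m : Fin N) :
    DL x (Pi.single m 1) = bb m x := by
  unfold DL bb
  rw [ContinuousLinearMap.smul_apply, ContinuousLinearMap.sum_apply, smul_eq_mul]
  congr 1
  refine Finset.sum_congr rfl fun q hq => ?_
  rw [ContinuousLinearMap.smul_apply, ll_apply_single, smul_eq_mul]

private lemma hasFDerivAt_bb {N : ℕ} {x : Fin N → ℝ} (m : Fin N)
    (hp : ∀ q ∈ SS N, 0 < Real.sinh (x q.1 - x q.2)) :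
    HasFDerivAt (bb m) (Dbb m x) x := by
  unfold bb Dbb
  refine HasFDerivAt.const_mul ?_ _
  refine HasFDerivAt.fun_sum fun q hq => ?_
  have hs : Real.sinh (x q.1 - x q.2) ≠ 0 := ne_of_gt (hp q hq)
  have h1 : HasDerivAt (fun t => cth t) (ddv (x q.1 - x q.2)) (x q.1 - x q.2) := by
    unfold cth ddv
    exact (Real.hasDerivAt_cosh _).div (Real.hasDerivAt_sinh _) hs
  have h2 := h1.comp_hasFDerivAt x (hasFDerivAt_sub_coord q x)
  have h3 := h2.mul_const ((if q.1 = m then (1:ℝ) else 0) - (if q.2 = m then 1 else 0))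
  exact h3

private lemma Dbb_apply_single {N : ℕ} (x : Fin N → ℝ) (m : Fin N) :
    Dbb m x (Pi.single m 1) = (1/2) * ∑ q ∈ SS N,
      ddv (x q.1 - x q.2) *
        ((if q.1 = m then (1:ℝ) else 0) - (if q.2 = m then 1 else 0))^2 := by
  unfold Dbb
  rw [ContinuousLinearMap.smul_apply, ContinuousLinearMap.sum_apply, smul_eq_mul]
  congr 1
  refine Finset.sum_congr rfl fun q hq => ?_
  rw [ContinuousLinearMap.smul_apply, ContinuousLinearMap.smul_apply, ll_apply_single,
    smul_eq_mul, smul_eq_mul]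
  ring

section E12test

private lemma sum_SS {M : Type*} [AddCommMonoid M] {N : ℕ} (f : Fin N × Fin N → M) :
    ∑ q ∈ SS N, f q = ∑ k : Fin N, ∑ j : Fin N, if k < j then f (k, j) else 0 := by
  unfold SS; exact sum_S f

private lemma E1 {N : ℕ} {x : Fin N → ℝ}
    (hp : ∀ k j : Fin N, k < j → 0 < x k - x j) :
    ∑ m : Fin N, (bb m x ^ 2 + Dbb m x (Pi.single m 1))
      = ((N:ℝ)^3 - N)/12 - (1/2) * ∑ q ∈ SS N, ((Real.sinh (x q.1 - x q.2))^2)⁻¹ := by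
  have hg : ∀ k j : Fin N, cth (x k - x j) = - cth (x j - x k) := fun k j => cth_anti _ _
  have hsne : ∀ k j : Fin N, k < j → Real.sinh (x k - x j) ≠ 0 :=
    fun k j h => ne_of_gt (Real.sinh_pos_iff.mpr (hp k j h))
  have htrip : ∀ a b c : Fin N, a < b → b < c →
      cth (x a - x b) * cth (x a - x c) + cth (x b - x a) * cth (x b - x c)
        + cth (x c - x a) * cth (x c - x b) = 1 := by
    intro a b c hab hbc
    have h1 := coth_triple (hp a b hab) (hp b c hbc)
    rw [hg b a, hg c a, hg c b,
      show x a - x c = (x a - x b) + (x b - x c) by ring] at *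
    linear_combination h1
  -- bb in "a" form
  have hbbA : ∀ m : Fin N, bb m x
      = (1/2) * ∑ j : Fin N, (if j = m then 0 else cth (x m - x j)) := by
    intro m
    unfold bb
    congr 1
    rw [sum_SS (fun q : Fin N × Fin N => cth (x q.1 - x q.2) *
      ((if q.1 = m then (1:ℝ) else 0) - (if q.2 = m then 1 else 0)))]
    exact a_eq (fun k j => cth (x k - x j)) hg m
  have hsum_bb : ∑ m : Fin N, bb m x ^ 2
      = (1/4) * (2 * (∑ k : Fin N, ∑ j : Fin N, if k < j then (cth (x k - x j))^2 else 0)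
        + 2 * (∑ a : Fin N, ∑ b : Fin N, ∑ c : Fin N, if a < b ∧ b < c then (1:ℝ) else 0)) := by
    rw [← key_sum (fun k j => cth (x k - x j)) hg htrip]
    rw [Finset.sum_congr rfl fun m _ => by rw [hbbA m]]
    rw [Finset.mul_sum]
    exact Finset.sum_congr rfl fun m _ => by ring
  have hsum_D : ∑ m : Fin N, Dbb m x (Pi.single m 1)
      = - ∑ q ∈ SS N, ((Real.sinh (x q.1 - x q.2))^2)⁻¹ := by
    rw [Finset.sum_congr rfl fun m (_ : m ∈ Finset.univ) => Dbb_apply_single x m]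
    rw [← Finset.mul_sum, Finset.sum_comm]
    have : ∀ q ∈ SS N, (∑ m : Fin N, ddv (x q.1 - x q.2) *
        ((if q.1 = m then (1:ℝ) else 0) - (if q.2 = m then 1 else 0))^2)
        = -(((Real.sinh (x q.1 - x q.2))^2)⁻¹) * 2 := by
      intro q hq
      have hlt : q.1 < q.2 := by
        have := Finset.mem_filter.mp hq
        exact this.2
      rw [← Finset.mul_sum, eps_sq_sum (ne_of_lt hlt), ddv_eq (hsne q.1 q.2 hlt)]
    rw [Finset.sum_congr rfl this, ← Finset.sum_mul, ← Finset.sum_neg_distrib]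
    ring
  have hG2 : (∑ k : Fin N, ∑ j : Fin N, if k < j then (cth (x k - x j))^2 else 0)
      = (∑ k : Fin N, ∑ j : Fin N, if k < j then ((Real.sinh (x k - x j))^2)⁻¹ else 0)
        + (∑ k : Fin N, ∑ j : Fin N, if k < j then (1:ℝ) else 0) := by
    rw [← Finset.sum_add_distrib]
    refine Finset.sum_congr rfl fun k _ => ?_
    rw [← Finset.sum_add_distrib]
    refine Finset.sum_congr rfl fun j _ => ?_
    by_cases h : k < j
    · simp only [h, if_true]
      rw [cth_sq (hsne k j h)]
    · simp [h]
  have hGinv : (∑ k : Fin N, ∑ j : Fin N, if k < j then ((Real.sinh (x k - x j))^2)⁻¹ else 0)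
      = ∑ q ∈ SS N, ((Real.sinh (x q.1 - x q.2))^2)⁻¹ :=
    (sum_SS (fun q : Fin N × Fin N => ((Real.sinh (x q.1 - x q.2))^2)⁻¹)).symm
  have hcount := count_fin N
  rw [Finset.sum_add_distrib, hsum_bb, hsum_D, hG2, hGinv]
  linarith

private lemma E2 {N : ℕ} (x : Fin N → ℝ) (p : Fin N → ℂ) :
    ∑ m : Fin N, (bb m x : ℂ) * p m
      = (1/2) * ∑ q ∈ SS N, ((cth (x q.1 - x q.2) : ℝ) : ℂ) * (p q.1 - p q.2) := by
  have hc : ∀ m : Fin N, ((bb m x : ℝ) : ℂ) = (1/2) * ∑ k : Fin N, ∑ j : Fin N,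
      (if k < j then ((cth (x k - x j):ℝ):ℂ) *
        ((if k = m then (1:ℂ) else 0) - (if j = m then 1 else 0)) else 0) := by
    intro m
    unfold bb
    rw [sum_SS (fun q : Fin N × Fin N => cth (x q.1 - x q.2) *
      ((if q.1 = m then (1:ℝ) else 0) - (if q.2 = m then 1 else 0)))]
    push_cast [apply_ite (Complex.ofReal)]
    norm_num
  calc ∑ m : Fin N, (bb m x : ℂ) * p m
      = (1/2) * ∑ m : Fin N, (∑ k : Fin N, ∑ j : Fin N,
          (if k < j then ((cth (x k - x j):ℝ):ℂ) *
            ((if k = m then (1:ℂ) else 0) - (if j = m then 1 else 0)) else 0)) * p m := by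
        rw [Finset.mul_sum]
        exact Finset.sum_congr rfl fun m _ => by rw [hc m]; ring
    _ = (1/2) * ∑ k : Fin N, ∑ j : Fin N,
          (if k < j then ((cth (x k - x j):ℝ):ℂ) * (p k - p j) else 0) := by
        rw [first_order (fun k j => ((cth (x k - x j):ℝ):ℂ)) p]
    _ = (1/2) * ∑ q ∈ SS N, ((cth (x q.1 - x q.2) : ℝ) : ℂ) * (p q.1 - p q.2) := by
        rw [sum_SS (fun q : Fin N × Fin N => ((cth (x q.1 - x q.2) : ℝ) : ℂ) * (p q.1 - p q.2))]

end E12test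
/-- Conjugation by `∏_{k<j} sinh^{1/2}(x_k − x_j)` transforms the radial part of the
Laplace–Beltrami operator on `SL(N,ℝ)/SO(N)` into the Sutherland (trigonometric
Calogero–Moser) Hamiltonian with inverse-sinh-squared potential plus the constant
`(N³ − N)/12`. -/
theorem radial_laplacian_conjugation_to_sutherland
    (N : ℕ) (hN : 2 ≤ N)
    (Ω : Set (Fin N → ℝ)) (hΩ : Ω = {x | ∀ k j : Fin N, k < j → x j < x k})
    (φ : (Fin N → ℝ) → ℂ) (hφ : ContDiffOn ℝ (⊤ : ℕ∞) φ Ω)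
    (ψ : (Fin N → ℝ) → ℂ)
    (hψ : ψ = fun x =>
      (Real.sqrt (∏ q ∈ Finset.univ.filter (fun q : Fin N × Fin N => q.1 < q.2),
          Real.sinh (x q.1 - x q.2)) : ℂ) * φ x) :
    ∀ x ∈ Ω,
      (Real.sqrt (∏ q ∈ Finset.univ.filter (fun q : Fin N × Fin N => q.1 < q.2),
          Real.sinh (x q.1 - x q.2)) : ℂ) *
        (-(∑ m : Fin N, pd m (pd m φ) x) -
          ∑ q ∈ Finset.univ.filter (fun q : Fin N × Fin N => q.1 < q.2),
            ((Real.cosh (x q.1 - x q.2) / Real.sinh (x q.1 - x q.2) : ℝ) : ℂ) *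
              (pd q.1 φ x - pd q.2 φ x)) =
      -(∑ m : Fin N, pd m (pd m ψ) x) -
        (1 / 2) * ∑ q ∈ Finset.univ.filter (fun q : Fin N × Fin N => q.1 < q.2),
          (((Real.sinh (x q.1 - x q.2) : ℂ)) ^ 2)⁻¹ * ψ x +
        (((N : ℂ) ^ 3 - (N : ℂ)) / 12) * ψ x := by
  intro x hx
  -- openness of Ω
  have hΩo : IsOpen Ω := by
    rw [hΩ]
    have hset : {y : Fin N → ℝ | ∀ k j : Fin N, k < j → y j < y k}
        = ⋂ (k : Fin N), ⋂ (j : Fin N), {y : Fin N → ℝ | k < j → y j < y k} := by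
      ext y; simp [Set.mem_iInter, Set.mem_setOf_eq]
    rw [hset]
    refine isOpen_iInter_of_finite fun k => isOpen_iInter_of_finite fun j => ?_
    by_cases h : k < j
    · have : {y : Fin N → ℝ | k < j → y j < y k} = {y : Fin N → ℝ | y j < y k} := by
        ext y; simp [h]
      rw [this]; exact isOpen_lt (continuous_apply j) (continuous_apply k)
    · have : {y : Fin N → ℝ | k < j → y j < y k} = Set.univ := by
        ext y; simp [h]
      rw [this]; exact isOpen_univ
  have hxlt : ∀ k j : Fin N, k < j → 0 < x k - x j := by
    rw [hΩ] at hx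
    intro k j h
    exact sub_pos.mpr (hx k j h)
  have hpos : ∀ y ∈ Ω, ∀ q ∈ SS N, 0 < Real.sinh (y q.1 - y q.2) := by
    intro y hy q hq
    rw [hΩ] at hy
    have hlt : q.1 < q.2 := (Finset.mem_filter.mp hq).2
    exact Real.sinh_pos_iff.mpr (sub_pos.mpr (hy q.1 q.2 hlt))
  have hnx : Ω ∈ nhds x := hΩo.mem_nhds hx
  have hφAt : ∀ y ∈ Ω, ContDiffAt ℝ (⊤ : ℕ∞) φ y := fun y hy => hφ.contDiffAt (hΩo.mem_nhds hy)
  have hφd : ∀ y ∈ Ω, DifferentiableAt ℝ φ y := fun y hy => (hφAt y hy).differentiableAt (by simp)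
  -- first derivative of ψ on Ω
  have hψd : ∀ y ∈ Ω, HasFDerivAt ψ
      ((Wf N y : ℂ) • fderiv ℝ φ y + φ y • (Complex.ofRealCLM.comp (Wf N y • DL y))) y := by
    intro y hy
    have hW := hasFDerivAt_Wf hΩo hy hpos
    have hWc : HasFDerivAt (fun z => ((Wf N z : ℝ) : ℂ))
        (Complex.ofRealCLM.comp (Wf N y • DL y)) y :=
      Complex.ofRealCLM.hasFDerivAt.comp y hW
    have h := hWc.mul ((hφd y hy).hasFDerivAt)
    rw [hψ]
    exact h
  have hpdψ : ∀ (m : Fin N), ∀ y ∈ Ω, pd m ψ y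
      = (Wf N y : ℂ) * pd m φ y + φ y * ((Wf N y * bb m y : ℝ) : ℂ) := by
    intro m y hy
    show fderiv ℝ ψ y (Pi.single m 1) = _
    rw [(hψd y hy).fderiv]
    rw [ContinuousLinearMap.add_apply, ContinuousLinearMap.smul_apply,
      ContinuousLinearMap.smul_apply, ContinuousLinearMap.comp_apply,
      ContinuousLinearMap.smul_apply, DL_apply_single]
    simp only [Complex.ofRealCLM_apply, smul_eq_mul, pd]
  -- second derivative
  have hsecond : ∀ m : Fin N, pd m (pd m ψ) x
      = (Wf N x : ℂ) * (pd m (pd m φ) x + 2 * (bb m x : ℂ) * pd m φ x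
          + ((bb m x ^ 2 + Dbb m x (Pi.single m 1) : ℝ) : ℂ) * φ x) := by
    intro m
    have h1 : ContDiffAt ℝ (⊤ : ℕ∞) (fderiv ℝ φ) x := (hφAt x hx).fderiv_right (by simp)
    have h2 : ContDiffAt ℝ (⊤ : ℕ∞) (pd m φ) x :=
      h1.clm_apply (contDiffAt_const (c := Pi.single m 1))
    have hpdφd : HasFDerivAt (pd m φ) (fderiv ℝ (pd m φ) x) x :=
      (h2.differentiableAt (by simp)).hasFDerivAt
    have hW := hasFDerivAt_Wf hΩo hx hpos
    have hWc : HasFDerivAt (fun z => ((Wf N z : ℝ) : ℂ))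
        (Complex.ofRealCLM.comp (Wf N x • DL x)) x :=
      Complex.ofRealCLM.hasFDerivAt.comp x hW
    have hbbd := hasFDerivAt_bb m (hpos x hx)
    have hWbb : HasFDerivAt (fun z => Wf N z * bb m z)
        (Wf N x • Dbb m x + bb m x • (Wf N x • DL x)) x := hW.mul hbbd
    have hWbbc : HasFDerivAt (fun z => ((Wf N z * bb m z : ℝ) : ℂ))
        (Complex.ofRealCLM.comp (Wf N x • Dbb m x + bb m x • (Wf N x • DL x))) x :=
      Complex.ofRealCLM.hasFDerivAt.comp x hWbb
    have hF : HasFDerivAt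
        (fun y => (Wf N y : ℂ) * pd m φ y + φ y * ((Wf N y * bb m y : ℝ) : ℂ))
        (((Wf N x : ℂ) • fderiv ℝ (pd m φ) x
            + pd m φ x • (Complex.ofRealCLM.comp (Wf N x • DL x)))
          + (φ x • (Complex.ofRealCLM.comp (Wf N x • Dbb m x + bb m x • (Wf N x • DL x)))
            + ((Wf N x * bb m x : ℝ) : ℂ) • fderiv ℝ φ x)) x :=
      (hWc.mul hpdφd).add ((hφd x hx).hasFDerivAt.mul hWbbc)
    have heq : pd m ψ =ᶠ[nhds x]
        (fun y => (Wf N y : ℂ) * pd m φ y + φ y * ((Wf N y * bb m y : ℝ) : ℂ)) :=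
      Filter.eventuallyEq_of_mem hnx (fun y hy => hpdψ m y hy)
    show fderiv ℝ (pd m ψ) x (Pi.single m 1) = _
    rw [heq.fderiv_eq, hF.fderiv]
    simp only [ContinuousLinearMap.add_apply, ContinuousLinearMap.smul_apply,
      ContinuousLinearMap.comp_apply, Complex.ofRealCLM_apply, DL_apply_single,
      smul_eq_mul, pd]
    push_cast
    ring
  -- sum over m
  have hsum : ∑ m : Fin N, pd m (pd m ψ) x
      = (Wf N x : ℂ) * (∑ m : Fin N, pd m (pd m φ) x)
        + 2 * (Wf N x : ℂ) * (∑ m : Fin N, (bb m x : ℂ) * pd m φ x)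
        + (Wf N x : ℂ) * ((∑ m : Fin N, (bb m x ^ 2 + Dbb m x (Pi.single m 1)) : ℝ) : ℂ) * φ x := by
    rw [Finset.sum_congr rfl fun m _ => hsecond m]
    push_cast
    rw [Finset.mul_sum, Finset.mul_sum, Finset.mul_sum, Finset.sum_mul, ← Finset.sum_add_distrib,
      ← Finset.sum_add_distrib]
    refine Finset.sum_congr rfl fun m _ => ?_
    push_cast
    ring
  have e2 : ∑ m : Fin N, (bb m x : ℂ) * pd m φ x
      = (1/2) * ∑ q ∈ SS N, ((cth (x q.1 - x q.2) : ℝ) : ℂ) * (pd q.1 φ x - pd q.2 φ x) :=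
    E2 x (fun m => pd m φ x)
  have e1 := E1 hxlt
  have hψx : ψ x = (Wf N x : ℂ) * φ x := by rw [hψ]; rfl
  rw [hψx, hsum, e2, e1, ← Finset.sum_mul]
  have hds : (Real.sqrt (∏ q ∈ Finset.univ.filter (fun q : Fin N × Fin N => q.1 < q.2),
      Real.sinh (x q.1 - x q.2)) : ℝ) = Wf N x := rfl
  rw [hds]
  simp only [SS, cth]
  push_cast
  ring
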